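/- arXiv:2407.21614 — 7 statements merged into one kernel-verified Lean document; each statement's English description precedes it below -/
import Mathlib

section
/- Let N ≥ 1 and let σ be a permutation of Fin N chosen uniformly at random (i.e., under the uniform probability measure on Equiv.Perm (Fin N)). Then for any nonempty finite subsets A, B ⊆ Fin N, the probability that min{σ(a) : a ∈ A} = min{σ(b) : b ∈ B} equals the Jaccard similarity J(A,B) = |A ∩ B| / |A ∪ B|. -/
open MeasureTheory

namespace MinHashAux

variable {N : ℕ}

/-- `Q A B x σ` says that `x` is the strict argmin of `σ` on `A ∪ B`. -/
def Q (A B : Finset (Fin N)) (x : Fin N) (σ : Equiv.Perm (Fin N)) : Prop :=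
  ∀ y ∈ A ∪ B, y ≠ x → σ x < σ y

instance (A B : Finset (Fin N)) (x : Fin N) (σ : Equiv.Perm (Fin N)) :
    Decidable (Q A B x σ) := by unfold Q; infer_instance

lemma exists_unique_argmin (A B : Finset (Fin N)) (hU : (A ∪ B).Nonempty)
    (σ : Equiv.Perm (Fin N)) : ∃! x, x ∈ A ∪ B ∧ Q A B x σ := by
  obtain ⟨x, hx, hmin⟩ := Finset.mem_image.mp (Finset.min'_mem _ (hU.image σ))
  refine ⟨x, ⟨hx, fun y hy hyx => ?_⟩, ?_⟩
  · have h1 : σ x ≤ σ y := hmin ▸ Finset.min'_le _ _ (Finset.mem_image_of_mem σ hy)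
    exact lt_of_le_of_ne h1 (fun h => hyx (σ.injective h.symm))
  · rintro z ⟨hz, hq⟩
    by_contra hne
    exact absurd (hq x hx (Ne.symm hne)) (not_lt.mpr ((hmin ▸
      Finset.min'_le _ _ (Finset.mem_image_of_mem σ hz)).trans (le_refl _)))

lemma event_iff (A B : Finset (Fin N)) (hA : A.Nonempty) (hB : B.Nonempty)
    (σ : Equiv.Perm (Fin N)) :
    (A.image σ).min' (hA.image σ) = (B.image σ).min' (hB.image σ) ↔
      ∃ x ∈ A ∩ B, Q A B x σ := by
  constructor
  · intro h
    obtain ⟨a, ha, hva⟩ := Finset.mem_image.mp (Finset.min'_mem _ (hA.image σ))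
    obtain ⟨b, hb, hvb⟩ := Finset.mem_image.mp (Finset.min'_mem _ (hB.image σ))
    have hab : a = b := σ.injective (by rw [hva, hvb, h])
    subst hab
    refine ⟨a, Finset.mem_inter.mpr ⟨ha, hb⟩, fun y hy hya => ?_⟩
    rcases Finset.mem_union.mp hy with hyA | hyB
    · have : σ a ≤ σ y := hva ▸ Finset.min'_le _ _ (Finset.mem_image_of_mem σ hyA)
      exact lt_of_le_of_ne this (fun h' => hya (σ.injective h'.symm))
    · have : σ a ≤ σ y := hvb ▸ Finset.min'_le _ _ (Finset.mem_image_of_mem σ hyB)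
      exact lt_of_le_of_ne this (fun h' => hya (σ.injective h'.symm))
  · rintro ⟨x, hx, hq⟩
    have hxA := (Finset.mem_inter.mp hx).1
    have hxB := (Finset.mem_inter.mp hx).2
    have hminA : (A.image σ).min' (hA.image σ) = σ x := by
      apply le_antisymm (Finset.min'_le _ _ (Finset.mem_image_of_mem σ hxA))
      apply Finset.le_min'
      intro v hv
      obtain ⟨y, hy, rfl⟩ := Finset.mem_image.mp hv
      rcases eq_or_ne y x with rfl | hne
      · exact le_refl _
      · exact (hq y (Finset.mem_union_left _ hy) hne).le
    have hminB : (B.image σ).min' (hB.image σ) = σ x := by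
      apply le_antisymm (Finset.min'_le _ _ (Finset.mem_image_of_mem σ hxB))
      apply Finset.le_min'
      intro v hv
      obtain ⟨y, hy, rfl⟩ := Finset.mem_image.mp hv
      rcases eq_or_ne y x with rfl | hne
      · exact le_refl _
      · exact (hq y (Finset.mem_union_right _ hy) hne).le
    rw [hminA, hminB]

lemma card_Q_const (A B : Finset (Fin N)) {x y : Fin N}
    (hx : x ∈ A ∪ B) (hy : y ∈ A ∪ B) :
    (Finset.univ.filter (Q A B x)).card = (Finset.univ.filter (Q A B y)).card := by
  apply Finset.card_bij' (fun σ _ => σ * Equiv.swap x y) (fun σ _ => σ * Equiv.swap x y)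
  · intro σ hσ
    simp only [Finset.mem_filter, Finset.mem_univ, true_and] at hσ ⊢
    intro z hz hzy
    have h1 : (σ * Equiv.swap x y) y = σ x := by
      simp [Equiv.Perm.mul_apply, Equiv.swap_apply_right]
    have h2 : (σ * Equiv.swap x y) z = σ (Equiv.swap x y z) := rfl
    rw [h1, h2]
    have hz' : Equiv.swap x y z ∈ A ∪ B := by
      rcases eq_or_ne z x with rfl | hzx
      · rwa [Equiv.swap_apply_left]
      · rw [Equiv.swap_apply_of_ne_of_ne hzx hzy]; exact hz
    have hne : Equiv.swap x y z ≠ x := by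
      intro h
      have := (Equiv.swap x y).injective (h.trans (Equiv.swap_apply_right x y).symm)
      exact hzy this
    exact hσ _ hz' hne
  · intro σ hσ
    simp only [Finset.mem_filter, Finset.mem_univ, true_and] at hσ ⊢
    intro z hz hzx
    have h1 : (σ * Equiv.swap x y) x = σ y := by
      simp [Equiv.Perm.mul_apply, Equiv.swap_apply_left]
    have h2 : (σ * Equiv.swap x y) z = σ (Equiv.swap x y z) := rfl
    rw [h1, h2]
    have hz' : Equiv.swap x y z ∈ A ∪ B := by
      rcases eq_or_ne z y with rfl | hzy
      · rwa [Equiv.swap_apply_right]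
      · rw [Equiv.swap_apply_of_ne_of_ne hzx hzy]; exact hz
    have hne : Equiv.swap x y z ≠ y := by
      intro h
      have := (Equiv.swap x y).injective (h.trans (Equiv.swap_apply_left x y).symm)
      exact hzx this
    exact hσ _ hz' hne
  · intro σ _; simp [mul_assoc]
  · intro σ _; simp [mul_assoc]

end MinHashAux

open MinHashAux in
/-- **MinHash alignment property.**  For a uniformly random permutation `σ` of `Fin N`
(uniform probability measure on `Equiv.Perm (Fin N)`) and nonempty finite sets
`A, B ⊆ Fin N`, the probability that `min σ(A) = min σ(B)` equals the Jaccard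
similarity `|A ∩ B| / |A ∪ B|`. -/
theorem minhash_alignment (N : ℕ) (hN : 1 ≤ N) (A B : Finset (Fin N))
    (hA : A.Nonempty) (hB : B.Nonempty) :
    letI : MeasurableSpace (Equiv.Perm (Fin N)) := ⊤
    (PMF.uniformOfFintype (Equiv.Perm (Fin N))).toMeasure
        {σ : Equiv.Perm (Fin N) |
          (A.image σ).min' (hA.image σ) = (B.image σ).min' (hB.image σ)}
      = ENNReal.ofReal (((A ∩ B).card : ℝ) / ((A ∪ B).card : ℝ)) := by
  letI : MeasurableSpace (Equiv.Perm (Fin N)) := ⊤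
  haveI : MeasurableSingletonClass (Equiv.Perm (Fin N)) := ⟨fun _ => trivial⟩
  have hU : (A ∪ B).Nonempty := hA.mono Finset.subset_union_left
  -- the event as a finset
  set E : Finset (Equiv.Perm (Fin N)) := Finset.univ.filter
    (fun σ => (A.image σ).min' (hA.image σ) = (B.image σ).min' (hB.image σ)) with hE
  have hset : {σ : Equiv.Perm (Fin N) |
      (A.image σ).min' (hA.image σ) = (B.image σ).min' (hB.image σ)} = ↑E := by
    ext σ; simp [hE]
  -- counting
  obtain ⟨x₀, hx₀⟩ := id hU
  set c : ℕ := (Finset.univ.filter (Q A B x₀)).card with hc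
  have hdisj : ∀ x ∈ A ∪ B, ∀ y ∈ A ∪ B, x ≠ y →
      Disjoint (Finset.univ.filter (Q A B x)) (Finset.univ.filter (Q A B y)) := by
    intro x hx y hy hxy
    rw [Finset.disjoint_left]
    intro σ hσx hσy
    simp only [Finset.mem_filter, Finset.mem_univ, true_and] at hσx hσy
    exact lt_asymm (hσx y hy (Ne.symm hxy)) (hσy x hx hxy)
  have hcardE : E.card = (A ∩ B).card * c := by
    have hEeq : E = (A ∩ B).biUnion (fun x => Finset.univ.filter (Q A B x)) := by
      ext σ
      simp only [hE, Finset.mem_filter, Finset.mem_univ, true_and, Finset.mem_biUnion]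
      rw [event_iff A B hA hB σ]
    rw [hEeq, Finset.card_biUnion (fun x hx y hy hxy => hdisj x
      (Finset.inter_subset_union hx) y (Finset.inter_subset_union hy) hxy)]
    rw [Finset.sum_congr rfl (fun x hx => card_Q_const A B
      (Finset.inter_subset_union hx) hx₀), Finset.sum_const, smul_eq_mul]
  have hcardU : Fintype.card (Equiv.Perm (Fin N)) = (A ∪ B).card * c := by
    have huniv : (Finset.univ : Finset (Equiv.Perm (Fin N))) =
        (A ∪ B).biUnion (fun x => Finset.univ.filter (Q A B x)) := by
      ext σ
      simp only [Finset.mem_univ, Finset.mem_biUnion, true_iff, Finset.mem_filter, true_and]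
      obtain ⟨x, ⟨hx, hq⟩, _⟩ := exists_unique_argmin A B hU σ
      exact ⟨x, hx, hq⟩
    rw [← Finset.card_univ, huniv, Finset.card_biUnion hdisj,
      Finset.sum_congr rfl (fun x hx => card_Q_const A B hx hx₀),
      Finset.sum_const, smul_eq_mul]
  have hcpos : 0 < c := by
    rcases Nat.eq_zero_or_pos c with h | h
    · have h0 := hcardU
      rw [h, mul_zero] at h0
      exact absurd h0 Fintype.card_ne_zero
    · exact h
  -- compute the measure
  rw [hset, PMF.toMeasure_apply_finset]
  simp only [PMF.uniformOfFintype_apply]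
  rw [Finset.sum_const, nsmul_eq_mul, hcardE, hcardU]
  have hUpos : 0 < (A ∪ B).card := Finset.card_pos.mpr hU
  rw [ENNReal.ofReal_div_of_pos (by exact_mod_cast hUpos)]
  rw [ENNReal.ofReal_natCast, ENNReal.ofReal_natCast]
  push_cast
  rw [ENNReal.eq_div_iff (by exact_mod_cast hUpos.ne') (ENNReal.natCast_ne_top _)]
  have hne : ((A ∪ B).card * c : ENNReal) ≠ 0 := by
    simp only [ne_eq, mul_eq_zero, Nat.cast_eq_zero, not_or]
    exact ⟨hUpos.ne', hcpos.ne'⟩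
  have htop : ((A ∪ B).card * c : ENNReal) ≠ ⊤ :=
    ENNReal.mul_ne_top (ENNReal.natCast_ne_top _) (ENNReal.natCast_ne_top _)
  have hrw : ((A ∪ B).card : ENNReal) * (((A ∩ B).card : ENNReal) * (c : ENNReal)) *
      (((A ∪ B).card : ENNReal) * (c : ENNReal))⁻¹ =
      ((A ∩ B).card : ENNReal) * ((((A ∪ B).card : ENNReal) * (c : ENNReal)) *
      (((A ∪ B).card : ENNReal) * (c : ENNReal))⁻¹) := by ring
  rw [← mul_assoc, hrw, ENNReal.mul_inv_cancel hne htop, mul_one]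
end

section
/- Fix reals 0 < r₂ < r₁ < 1 and N ≥ 1. Let σ be a uniformly random permutation of Fin N. For any nonempty finite subsets A, B ⊆ Fin N: (i) if J(A,B) ≥ r₁ then the probability that min{σ(a) : a ∈ A} = min{σ(b) : b ∈ B} is at least r₁; (ii) if J(A,B) ≤ r₂ then this probability is at most r₂. Hence the family of uniformly random permutations (used as MinHash functions) is (r₁, r₂, r₁, r₂)-sensitive for every choice r₁ > r₂. -/
/-!
MinHash collisions are exactly the permutations whose minimum over `A ∪ B` is attained in
`A ∩ B`. Composing with the transposition `(x y)` on the right moves the argmin over a set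
`s ∋ x, y` from `x` to `y`, so the argmin is uniformly distributed on `s`. Hence the collision
probability equals the Jaccard similarity `|A ∩ B| / |A ∪ B|`, which gives both bounds.
-/

open MeasureTheory Finset Equiv

theorem Finset.min'_eq_min'_iff_min'_union_mem_inter {α : Type*} [LinearOrder α]
    {s t : Finset α} (hs : s.Nonempty) (ht : t.Nonempty) :
    s.min' hs = t.min' ht ↔ (s ∪ t).min' (hs.mono subset_union_left) ∈ s ∩ t := by
  rw [min'_union hs ht, mem_inter]
  constructor
  · intro h
    rw [h, inf_idem]
    exact ⟨h ▸ min'_mem s hs, min'_mem t ht⟩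
  · rintro ⟨hs_mem, ht_mem⟩
    exact le_antisymm ((min'_le s _ hs_mem).trans inf_le_right)
      ((min'_le t _ ht_mem).trans inf_le_left)

theorem Finset.image_swap_of_mem {α : Type*} [DecidableEq α] {s : Finset α} {x y : α}
    (hx : x ∈ s) (hy : y ∈ s) : s.image (swap x y) = s := by
  have hfix : {a | swap x y a ≠ a} ⊆ s := fun a ha => by
    by_contra has
    exact ha (swap_apply_of_ne_of_ne (by rintro rfl; exact has hx) (by rintro rfl; exact has hy))
  simpa [map_eq_image] using map_perm hfix

namespace Equiv.Perm

variable {α : Type*} [LinearOrder α] {s : Finset α} (hs : s.Nonempty)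

noncomputable def argminOn (σ : Perm α) (s : Finset α) (hs : s.Nonempty) : α :=
  σ.symm ((s.image σ).min' (hs.image σ))

theorem min'_image_eq_min'_image_iff {A B : Finset α} (hA : A.Nonempty) (hB : B.Nonempty)
    (σ : Perm α) :
    (A.image σ).min' (hA.image σ) = (B.image σ).min' (hB.image σ) ↔
      σ.argminOn (A ∪ B) (hA.mono subset_union_left) ∈ A ∩ B := by
  rw [min'_eq_min'_iff_min'_union_mem_inter, argminOn]
  simp_rw [← image_union, ← image_inter _ _ σ.injective, ← coe_toEmbedding, ← map_eq_image]
  exact mem_map_equiv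

theorem argminOn_mul_of_image_eq (σ : Perm α) {τ : Perm α} (hτ : s.image τ = s) :
    (σ * τ).argminOn s hs = τ.symm (σ.argminOn s hs) := by
  simp_rw [argminOn, coe_mul, ← image_image, hτ]
  rfl

theorem argminOn_mem (σ : Perm α) : σ.argminOn s hs ∈ s := by
  obtain ⟨a, ha, hσa⟩ := mem_image.mp ((s.image σ).min'_mem (hs.image σ))
  rw [argminOn, ← hσa, symm_apply_apply]
  exact ha

variable [Fintype α]

theorem card_filter_argminOn_eq_of_mem {x y : α} (hx : x ∈ s) (hy : y ∈ s) :
    #{σ : Perm α | σ.argminOn s hs = x} = #{σ : Perm α | σ.argminOn s hs = y} := by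
  refine card_equiv (Equiv.mulRight (swap x y)) fun σ => ?_
  simp only [mem_filter, mem_univ, true_and, coe_mulRight,
    argminOn_mul_of_image_eq hs σ (image_swap_of_mem hx hy), symm_swap, swap_apply_eq_iff,
    swap_apply_right]

theorem card_mul_card_filter_argminOn_eq {x : α} (hx : x ∈ s) :
    #s * #{σ : Perm α | σ.argminOn s hs = x} = Fintype.card (Perm α) := by
  rw [← card_univ, card_eq_sum_card_fiberwise (s := univ) fun σ _ => argminOn_mem hs σ,
    sum_congr rfl fun y hy => card_filter_argminOn_eq_of_mem hs hy hx, sum_const, smul_eq_mul]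

theorem card_filter_argminOn_mem_mul {t : Finset α} (ht : t ⊆ s) :
    #{σ : Perm α | σ.argminOn s hs ∈ t} * #s = #t * Fintype.card (Perm α) := by
  rw [card_eq_sum_card_fiberwise (s := {σ : Perm α | σ.argminOn s hs ∈ t}) (t := t)
    fun σ hσ => (mem_filter.mp hσ).2, sum_mul, ← smul_eq_mul, ← sum_const]
  refine sum_congr rfl fun x hx => ?_
  rw [filter_filter, mul_comm, ← card_mul_card_filter_argminOn_eq hs (ht hx)]
  congr 2
  ext σ
  simp only [mem_filter, mem_univ, true_and, and_iff_right_iff_imp]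
  exact fun h => h ▸ hx

theorem toMeasure_uniformOfFintype_argminOn_mem [MeasurableSpace (Perm α)]
    [MeasurableSingletonClass (Perm α)] {t : Finset α} (ht : t ⊆ s) :
    (PMF.uniformOfFintype (Perm α)).toMeasure {σ | σ.argminOn s hs ∈ t} = #t / #s := by
  rw [PMF.toMeasure_uniformOfFintype_apply _ (Set.toFinite _).measurableSet,
    Fintype.card_subtype, ENNReal.div_eq_div_iff]
  · simp only [Set.mem_ofPred_eq]
    rw [mul_comm, mul_comm (Fintype.card _ : ENNReal)]
    exact_mod_cast card_filter_argminOn_mem_mul hs ht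
  all_goals simp [hs.ne_empty, Fintype.card_ne_zero]

theorem toMeasure_uniformOfFintype_min'_image_eq_min'_image [MeasurableSpace (Perm α)]
    [MeasurableSingletonClass (Perm α)] {A B : Finset α} (hA : A.Nonempty) (hB : B.Nonempty) :
    (PMF.uniformOfFintype (Perm α)).toMeasure
        {σ | (A.image σ).min' (hA.image σ) = (B.image σ).min' (hB.image σ)} =
      #(A ∩ B) / #(A ∪ B) := by
  simp_rw [min'_image_eq_min'_image_iff hA hB]
  exact toMeasure_uniformOfFintype_argminOn_mem _ inter_subset_union

end Equiv.Perm

theorem minhash_lsh_sensitive_general (N : ℕ) (r₁ r₂ : ℝ)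
    (A B : Finset (Fin N)) (hA : A.Nonempty) (hB : B.Nonempty) :
    letI : MeasurableSpace (Equiv.Perm (Fin N)) := ⊤
    (r₁ ≤ ((A ∩ B).card : ℝ) / ((A ∪ B).card : ℝ) →
      ENNReal.ofReal r₁ ≤
        (PMF.uniformOfFintype (Equiv.Perm (Fin N))).toMeasure
          {σ : Equiv.Perm (Fin N) |
            (A.image σ).min' (hA.image σ) = (B.image σ).min' (hB.image σ)}) ∧
    (((A ∩ B).card : ℝ) / ((A ∪ B).card : ℝ) ≤ r₂ →
      (PMF.uniformOfFintype (Equiv.Perm (Fin N))).toMeasure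
          {σ : Equiv.Perm (Fin N) |
            (A.image σ).min' (hA.image σ) = (B.image σ).min' (hB.image σ)}
        ≤ ENNReal.ofReal r₂) := by
  let _ : MeasurableSpace (Equiv.Perm (Fin N)) := ⊤
  have : MeasurableSingletonClass (Equiv.Perm (Fin N)) := ⟨fun _ => trivial⟩
  have hunion : (0 : ℝ) < #(A ∪ B) := by exact_mod_cast (hA.mono subset_union_left).card_pos
  rw [Equiv.Perm.toMeasure_uniformOfFintype_min'_image_eq_min'_image hA hB,
    ← ENNReal.ofReal_natCast, ← ENNReal.ofReal_natCast, ← ENNReal.ofReal_div_of_pos hunion]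
  exact ⟨ENNReal.ofReal_le_ofReal, ENNReal.ofReal_le_ofReal⟩

/-- **Uniformly random permutations used as MinHash functions form an
`(r₁, r₂, r₁, r₂)`-sensitive family.**  For `0 < r₂ < r₁ < 1` and nonempty finite
sets `A, B ⊆ Fin N`: (i) if `J(A,B) ≥ r₁` then the probability (over a uniformly
random permutation `σ` of `Fin N`) that `min σ(A) = min σ(B)` is at least `r₁`;
(ii) if `J(A,B) ≤ r₂` then this probability is at most `r₂`. -/
theorem minhash_lsh_sensitive (N : ℕ) (hN : 1 ≤ N) (r₁ r₂ : ℝ)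
    (hr₂ : 0 < r₂) (hr : r₂ < r₁) (hr₁ : r₁ < 1)
    (A B : Finset (Fin N)) (hA : A.Nonempty) (hB : B.Nonempty) :
    letI : MeasurableSpace (Equiv.Perm (Fin N)) := ⊤
    (r₁ ≤ ((A ∩ B).card : ℝ) / ((A ∪ B).card : ℝ) →
      ENNReal.ofReal r₁ ≤
        (PMF.uniformOfFintype (Equiv.Perm (Fin N))).toMeasure
          {σ : Equiv.Perm (Fin N) |
            (A.image σ).min' (hA.image σ) = (B.image σ).min' (hB.image σ)}) ∧
    (((A ∩ B).card : ℝ) / ((A ∪ B).card : ℝ) ≤ r₂ →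
      (PMF.uniformOfFintype (Equiv.Perm (Fin N))).toMeasure
          {σ : Equiv.Perm (Fin N) |
            (A.image σ).min' (hA.image σ) = (B.image σ).min' (hB.image σ)}
        ≤ ENNReal.ofReal r₂) :=
  minhash_lsh_sensitive_general N r₁ r₂ A B hA hB
end

section
/- Let N ≥ 1, k ≥ 1, and let σ₁, …, σₖ be independent uniformly random permutations of Fin N (i.e., under the product of uniform measures on Equiv.Perm (Fin N)). For nonempty finite subsets A, B ⊆ Fin N, let Ĵ = (1/k)·|{i ∈ [k] : min σᵢ(A) = min σᵢ(B)}| be the fraction of matching MinHash coordinates. Then for every ε > 0, Pr[|Ĵ − J(A,B)| ≥ ε] ≤ 2·exp(−2kε²). In particular the k-MinHash signature estimates the Jaccard similarity with additive error O(1/√k) with high probability in k. -/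
open MeasureTheory ProbabilityTheory Finset
open scoped NNReal

/-!
For a uniform permutation `π`, let `m(π) = minHashArg π (A ∪ B)` be the element at which `π`
is smallest on `A ∪ B`. The two MinHash values of `A` and `B` agree exactly when `m(π) ∈ A ∩ B`, and `m(π)` is
uniformly distributed on `A ∪ B`, because right multiplication by the transposition `(x y)`
carries the fibre of `m` over `x` bijectively onto the fibre over `y`. Hence each coordinate of the
signature matches with probability `J(A, B)`, independently across the `k` coordinates, and
Hoeffding's inequality for `[0, 1]`-valued variables gives the bound.
-/

section Hoeffding

variable {Ω ι : Type*} {mΩ : MeasurableSpace Ω} {μ : Measure Ω} [IsProbabilityMeasure μ]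
  {X : ι → Ω → ℝ} {a b : ℝ}

lemma measureReal_abs_sum_sub_integral_ge_le (h_indep : iIndepFun X μ)
    (hm : ∀ i, AEMeasurable (X i) μ) (hb : ∀ i, ∀ᵐ ω ∂μ, X i ω ∈ Set.Icc a b)
    (s : Finset ι) {t : ℝ} (ht : 0 ≤ t) :
    μ.real {ω | t ≤ |∑ i ∈ s, (X i ω - μ[X i])|}
      ≤ 2 * Real.exp (-2 * t ^ 2 / (#s * (b - a) ^ 2)) := by
  have h_subG (i : ι) := hasSubgaussianMGF_of_mem_Icc (hm i) (hb i)
  have h_indep' : iIndepFun (fun i ω ↦ X i ω - μ[X i]) μ :=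
    h_indep.comp (fun i y ↦ y - ∫ ω, X i ω ∂μ) (fun _ ↦ by fun_prop)
  have upper := HasSubgaussianMGF.measure_sum_ge_le_of_iIndepFun h_indep' (s := s)
    (fun i _ ↦ h_subG i) ht
  have lower := HasSubgaussianMGF.measure_sum_ge_le_of_iIndepFun
    (h_indep'.comp (fun _ (x : ℝ) ↦ -x) (fun _ ↦ by fun_prop)) (s := s)
    (fun i _ ↦ (h_subG i).neg) ht
  have h_exp : -t ^ 2 / (2 * ((∑ _i ∈ s, (‖b - a‖₊ / 2) ^ 2 : ℝ≥0) : ℝ))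
      = -2 * t ^ 2 / (#s * (b - a) ^ 2) := by
    push_cast
    rw [sum_const, nsmul_eq_mul, Real.norm_eq_abs, div_pow, sq_abs,
      show 2 * (#s * ((b - a) ^ 2 / 2 ^ 2)) = #s * (b - a) ^ 2 / 2 by ring, div_div_eq_mul_div]
    ring
  rw [h_exp] at upper lower
  simp only [Function.comp_apply] at lower
  calc μ.real {ω | t ≤ |∑ i ∈ s, (X i ω - μ[X i])|}
      ≤ μ.real ({ω | t ≤ ∑ i ∈ s, (X i ω - μ[X i])} ∪
          {ω | t ≤ ∑ i ∈ s, -(X i ω - μ[X i])}) := by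
        refine measureReal_mono fun ω hω ↦ ?_
        simpa only [Set.mem_union, Set.mem_ofPred_eq, sum_neg_distrib, ← le_abs] using hω
    _ ≤ _ := measureReal_union_le _ _
    _ ≤ 2 * Real.exp (-2 * t ^ 2 / (#s * (b - a) ^ 2)) := by linarith

lemma measureReal_abs_mean_sub_ge_le [Fintype ι] [Nonempty ι] {p : ℝ} (h_indep : iIndepFun X μ)
    (hm : ∀ i, AEMeasurable (X i) μ) (hb : ∀ i, ∀ᵐ ω ∂μ, X i ω ∈ Set.Icc a b)
    (hp : ∀ i, μ[X i] = p) {ε : ℝ} (hε : 0 ≤ ε) :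
    μ.real {ω | ε ≤ |(∑ i, X i ω) / Fintype.card ι - p|}
      ≤ 2 * Real.exp (-2 * Fintype.card ι * ε ^ 2 / (b - a) ^ 2) := by
  have hn : (0 : ℝ) < Fintype.card ι := by exact_mod_cast Fintype.card_pos
  have h_set : {ω | ε ≤ |(∑ i, X i ω) / Fintype.card ι - p|}
      = {ω | Fintype.card ι * ε ≤ |∑ i, (X i ω - μ[X i])|} := by
    ext ω
    simp only [Set.mem_ofPred_eq, hp, sum_sub_distrib, sum_const, card_univ, nsmul_eq_mul]
    rw [← mul_le_mul_iff_of_pos_left hn, ← abs_of_pos hn, ← abs_mul, abs_of_pos hn]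
    congr! 2
    field_simp
  rw [h_set]
  convert measureReal_abs_sum_sub_integral_ge_le h_indep hm hb univ
    (t := Fintype.card ι * ε) (by positivity) using 3
  rw [card_univ]
  field_simp

end Hoeffding

lemma Finset.min'_union_mem_inter_iff {α : Type*} [LinearOrder α] {s t : Finset α}
    (hs : s.Nonempty) (ht : t.Nonempty) :
    (s ∪ t).min' (hs.mono subset_union_left) ∈ s ∩ t ↔ s.min' hs = t.min' ht := by
  rw [min'_union hs ht, mem_inter]
  constructor
  · rintro ⟨h₁, h₂⟩
    exact le_antisymm ((min'_le s _ h₁).trans inf_le_right) ((min'_le t _ h₂).trans inf_le_left)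
  · intro h
    rw [h, inf_idem]
    exact ⟨h ▸ min'_mem s hs, min'_mem t ht⟩

section MinHash

variable {α : Type*} [LinearOrder α]

def minHashArg (π : Equiv.Perm α) (s : Finset α) (hs : s.Nonempty) : α :=
  π.symm ((s.image π).min' (hs.image π))

lemma minHashArg_mem (π : Equiv.Perm α) {s : Finset α} (hs : s.Nonempty) :
    minHashArg π s hs ∈ s := by
  obtain ⟨a, ha, h⟩ := mem_image.mp (min'_mem _ (hs.image π))
  simp [minHashArg, ← h, ha]

lemma min'_image_eq_iff_minHashArg_mem_inter (π : Equiv.Perm α) {A B : Finset α}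
    (hA : A.Nonempty) (hB : B.Nonempty) :
    (A.image π).min' (hA.image π) = (B.image π).min' (hB.image π) ↔
      minHashArg π (A ∪ B) (hA.mono subset_union_left) ∈ A ∩ B := by
  rw [← min'_union_mem_inter_iff, ← image_inter _ _ π.injective]
  simp only [minHashArg, image_union]
  constructor
  · intro h
    obtain ⟨a, ha, h_eq⟩ := mem_image.mp h
    simpa [← h_eq] using ha
  · intro h
    exact mem_image.mpr ⟨_, h, by simp⟩

lemma minHashArg_mul_of_image_eq (π τ : Equiv.Perm α) {s : Finset α} (hs : s.Nonempty)
    (hτ : s.image τ = s) :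
    minHashArg (π * τ) s hs = τ.symm (minHashArg π s hs) := by
  have h_image : s.image (π * τ) = s.image π := by
    rw [Equiv.Perm.coe_mul, ← image_image, hτ]
  simp only [minHashArg, h_image]
  rfl

lemma card_filter_minHashArg_eq_eq_of_mem [Fintype α] {s : Finset α} (hs : s.Nonempty)
    {x y : α} (hx : x ∈ s) (hy : y ∈ s) :
    #{π : Equiv.Perm α | minHashArg π s hs = x} = #{π : Equiv.Perm α | minHashArg π s hs = y} := by
  have h_swap : s.image (Equiv.swap x y) = s := by
    rw [← Equiv.coe_toEmbedding, ← map_eq_image]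
    refine map_perm fun a ha ↦ ?_
    rcases (Equiv.swap_apply_ne_self_iff.mp ha).2 with rfl | rfl <;> assumption
  have h_arg (π : Equiv.Perm α) :
      minHashArg (π * Equiv.swap x y) s hs = Equiv.swap x y (minHashArg π s hs) :=
    minHashArg_mul_of_image_eq π _ hs h_swap
  refine card_nbij' (· * Equiv.swap x y) (· * Equiv.swap x y) ?_ ?_ ?_ ?_ <;>
    intro π hπ <;> simp_all

lemma card_filter_minHashArg_mem_mul_card [Fintype α] {s t : Finset α} (hs : s.Nonempty)
    (hts : t ⊆ s) :
    #{π : Equiv.Perm α | minHashArg π s hs ∈ t} * #s = #t * Fintype.card (Equiv.Perm α) := by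
  obtain ⟨x₀, hx₀⟩ := id hs
  set c := #{π : Equiv.Perm α | minHashArg π s hs = x₀}
  have h_count (u : Finset α) (hus : u ⊆ s) :
      #{π : Equiv.Perm α | minHashArg π s hs ∈ u} = #u * c := by
    rw [← sum_card_fiberwise_eq_card_filter,
      sum_congr rfl fun x hx ↦ card_filter_minHashArg_eq_eq_of_mem hs (hus hx) hx₀,
      sum_const, smul_eq_mul]
  have h_total : Fintype.card (Equiv.Perm α) = #{π : Equiv.Perm α | minHashArg π s hs ∈ s} := by
    rw [filter_true_of_mem fun π _ ↦ minHashArg_mem π hs, card_univ]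
  rw [h_count t hts, h_total, h_count s subset_rfl]
  ring

lemma measureReal_min'_image_eq_min'_image [Fintype α]
    [MeasurableSpace (Equiv.Perm α)] [MeasurableSingletonClass (Equiv.Perm α)]
    {A B : Finset α} (hA : A.Nonempty) (hB : B.Nonempty) :
    (PMF.uniformOfFintype (Equiv.Perm α)).toMeasure.real
        {π | (A.image π).min' (hA.image π) = (B.image π).min' (hB.image π)}
      = #(A ∩ B) / #(A ∪ B) := by
  have hAB := hA.mono (subset_union_left (s₂ := B))
  have h_set : {π : Equiv.Perm α | (A.image π).min' (hA.image π) = (B.image π).min' (hB.image π)}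
      = ↑({π | minHashArg π (A ∪ B) hAB ∈ A ∩ B} : Finset (Equiv.Perm α)) := by
    ext π
    simp only [Set.mem_ofPred_eq, coe_filter, mem_univ, true_and]
    exact min'_image_eq_iff_minHashArg_mem_inter π hA hB
  have h_count := card_filter_minHashArg_mem_mul_card hAB (inter_subset_union (s := A) (t := B))
  have h_card : (0 : ℝ) < #(A ∪ B) := by exact_mod_cast hAB.card_pos
  rw [h_set, measureReal_def, PMF.toMeasure_uniformOfFintype_apply _ (Finset.measurableSet _)]
  simp only [coe_sort_coe, Fintype.card_coe, ENNReal.toReal_div, ENNReal.toReal_natCast]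
  rw [div_eq_div_iff (by positivity) h_card.ne']
  exact_mod_cast h_count

end MinHash

theorem kminhash_concentration_general (N k : ℕ) (hk : 1 ≤ k)
    (A B : Finset (Fin N)) (hA : A.Nonempty) (hB : B.Nonempty)
    (ε : ℝ) (hε : 0 < ε) :
    letI : MeasurableSpace (Equiv.Perm (Fin N)) := ⊤
    (Measure.pi fun _ : Fin k =>
        (PMF.uniformOfFintype (Equiv.Perm (Fin N))).toMeasure)
      {σ : Fin k → Equiv.Perm (Fin N) |
        ε ≤ |((Finset.univ.filter fun i : Fin k =>
                  (A.image (σ i)).min' (hA.image (σ i)) =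
                    (B.image (σ i)).min' (hB.image (σ i))).card : ℝ) / (k : ℝ)
              - ((A ∩ B).card : ℝ) / ((A ∪ B).card : ℝ)|}
      ≤ ENNReal.ofReal (2 * Real.exp (-2 * (k : ℝ) * ε ^ 2)) := by
  let _ : MeasurableSpace (Equiv.Perm (Fin N)) := ⊤
  have : Nonempty (Fin k) := ⟨⟨0, hk⟩⟩
  set μ₀ := (PMF.uniformOfFintype (Equiv.Perm (Fin N))).toMeasure
  set S := {π : Equiv.Perm (Fin N) | (A.image π).min' (hA.image π) = (B.image π).min' (hB.image π)}
  set f : Equiv.Perm (Fin N) → ℝ := S.indicator 1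
  have h_mean (i : Fin k) :
      ∫ σ, f (σ i) ∂(Measure.pi fun _ ↦ μ₀) = (#(A ∩ B) : ℝ) / #(A ∪ B) := by
    have h_eval := measurePreserving_eval (fun _ : Fin k ↦ μ₀) i
    rw [← integral_map h_eval.measurable.aemeasurable
      Measurable.of_discrete.aestronglyMeasurable, h_eval.map_eq,
      integral_indicator_one MeasurableSet.of_discrete, measureReal_min'_image_eq_min'_image hA hB]
  have h_bound := measureReal_abs_mean_sub_ge_le
    (X := fun i (σ : Fin k → Equiv.Perm (Fin N)) ↦ f (σ i)) (a := 0) (b := 1)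
    (iIndepFun_pi fun _ ↦ Measurable.of_discrete.aemeasurable)
    (fun _ ↦ Measurable.of_discrete.aemeasurable)
    (fun _ ↦ ae_of_all _ fun σ ↦ by simp only [f, Set.indicator_apply]; split_ifs <;> simp)
    h_mean hε.le
  have h_sum (σ : Fin k → Equiv.Perm (Fin N)) : ∑ i, f (σ i) = #{i | σ i ∈ S} := by
    simp only [f, Set.indicator_apply, Pi.one_apply, sum_boole]
  simp only [h_sum, Fintype.card_fin, sub_zero, one_pow, div_one] at h_bound
  rw [← ofReal_measureReal]
  exact ENNReal.ofReal_le_ofReal h_bound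

/-- **Concentration of the `k`-MinHash estimator.**  Let `σ₁, …, σₖ` be independent
uniformly random permutations of `Fin N` (product of uniform measures on
`Equiv.Perm (Fin N)`).  For nonempty finite sets `A, B ⊆ Fin N`, the fraction `Ĵ`
of indices `i` with `min σᵢ(A) = min σᵢ(B)` satisfies
`Pr[|Ĵ − J(A,B)| ≥ ε] ≤ 2 exp(−2 k ε²)` for every `ε > 0`. -/
theorem kminhash_concentration (N k : ℕ) (hN : 1 ≤ N) (hk : 1 ≤ k)
    (A B : Finset (Fin N)) (hA : A.Nonempty) (hB : B.Nonempty)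
    (ε : ℝ) (hε : 0 < ε) :
    letI : MeasurableSpace (Equiv.Perm (Fin N)) := ⊤
    (Measure.pi fun _ : Fin k =>
        (PMF.uniformOfFintype (Equiv.Perm (Fin N))).toMeasure)
      {σ : Fin k → Equiv.Perm (Fin N) |
        ε ≤ |((Finset.univ.filter fun i : Fin k =>
                  (A.image (σ i)).min' (hA.image (σ i)) =
                    (B.image (σ i)).min' (hB.image (σ i))).card : ℝ) / (k : ℝ)
              - ((A ∩ B).card : ℝ) / ((A ∪ B).card : ℝ)|}
      ≤ ENNReal.ofReal (2 * Real.exp (-2 * (k : ℝ) * ε ^ 2)) :=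
  kminhash_concentration_general N k hk A B hA hB ε hε
end

section
/- Let (Ω, P) be a probability space, U a finite type, V a linear order, and h : Ω → (U → V) a random hash function. Fix a finite set A ⊆ U, a natural number ℓ with ℓ ≤ |A|, a real ε ≥ 0, and a subset C ⊆ A with |C| ≥ ℓ. For ω ∈ Ω let f_ω : U → V × U be the injective map x ↦ (h(ω)(x), x), where V × U carries the lexicographic order. Assume that for every X ⊆ A with |X| = ℓ, P{ω : ∀ x ∈ X, ∀ y ∈ A \ X, f_ω(x) < f_ω(y)} ≤ (1+ε) / C(|A|, ℓ). Then P{ω : ∃ C' ⊆ C with |C'| = ℓ and f_ω(C') = Smallest(f_ω(A), ℓ)} ≤ (1+ε) · C(|C|, ℓ) / C(|A|, ℓ). -/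
open MeasureTheory

/-- `Smallest S r` is the set of the `r` smallest elements of the finite set `S`
(in a linear order); if `|S| ≤ r` it is `S` itself. -/
def Smallest {L : Type*} [LinearOrder L] (S : Finset L) (r : ℕ) : Finset L :=
  ((S.sort (· ≤ ·)).take r).toFinset

/-!
If some `ℓ`-subset `C' ⊆ C` is mapped onto the `ℓ` smallest hash values, then every hash value
on `C'` lies below every hash value on `A \ C'`; this is the order event of the hypothesis for
`X = C'`. So the event in question is contained in the union of those order events over the
`C(|C|, ℓ)` subsets `X ⊆ C` of size `ℓ`, and the union bound finishes the proof. The tie-breaking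
by `x` in `(h ω x, x)` makes the hash map injective, so `C'` misses the value of any `y ∉ C'`.
-/

theorem lt_of_mem_smallest_of_notMem_smallest {L : Type*} [LinearOrder L] {S : Finset L}
    {r : ℕ} {a b : L} (ha : a ∈ Smallest S r) (hb : b ∈ S) (hb' : b ∉ Smallest S r) :
    a < b := by
  set l := S.sort (· ≤ ·)
  have hsorted : (l.take r ++ l.drop r).Pairwise (· < ·) := by
    rw [List.take_append_drop]
    exact S.sortedLT_sort.pairwise
  have ha : a ∈ l.take r := by simpa [Smallest] using ha
  have hb : b ∈ l.drop r := by
    have hb : b ∈ l.take r ++ l.drop r := by simpa [List.take_append_drop, l] using hb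
    exact (List.mem_append.mp hb).resolve_left (by simpa [Smallest] using hb')
  exact (List.pairwise_append.mp hsorted).2.2 a ha b hb

theorem lt_of_image_eq_smallest {α L : Type*} [DecidableEq α] [LinearOrder L] {f : α → L}
    (hf : Function.Injective f) {A X : Finset α} {r : ℕ}
    (hX : X.image f = Smallest (A.image f) r) {x y : α} (hx : x ∈ X) (hy : y ∈ A \ X) :
    f x < f y := by
  rw [Finset.mem_sdiff] at hy
  refine lt_of_mem_smallest_of_notMem_smallest (hX ▸ Finset.mem_image_of_mem f hx)
    (Finset.mem_image_of_mem f hy.1) ?_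
  rw [← hX, hf.mem_finset_image]
  exact hy.2

theorem measure_biUnion_finset_le_card_mul {Ω ι : Type*} [MeasurableSpace Ω] (μ : Measure Ω)
    (s : Finset ι) (E : ι → Set Ω) {c : ENNReal} (hE : ∀ i ∈ s, μ (E i) ≤ c) :
    μ (⋃ i ∈ s, E i) ≤ s.card * c :=
  (measure_biUnion_finset_le s E).trans <|
    (Finset.sum_le_card_nsmul s _ c hE).trans_eq (nsmul_eq_mul _ _)

theorem natCast_mul_ofReal_div (n : ℕ) (a b : ℝ) :
    (n : ENNReal) * ENNReal.ofReal (a / b) = ENNReal.ofReal (a * n / b) := by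
  rw [← ENNReal.ofReal_natCast, ← ENNReal.ofReal_mul n.cast_nonneg]
  congr 1
  ring

theorem union_bound_smallest_in_deleted_general {Ω U V : Type*} [MeasurableSpace Ω]
    (P : Measure Ω)
    [LinearOrder U] [LinearOrder V]
    (h : Ω → U → V) (A : Finset U) (ℓ : ℕ)
    (ε : ℝ) (C : Finset U) (hC : C ⊆ A)
    (hmin : ∀ X ⊆ A, X.card = ℓ →
      P {ω | ∀ x ∈ X, ∀ y ∈ A \ X, toLex (h ω x, x) < toLex (h ω y, y)}
        ≤ ENNReal.ofReal ((1 + ε) / (A.card.choose ℓ : ℝ))) :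
    P {ω | ∃ C' ⊆ C, C'.card = ℓ ∧
          C'.image (fun x => toLex (h ω x, x)) =
            Smallest (A.image fun x => toLex (h ω x, x)) ℓ}
      ≤ ENNReal.ofReal ((1 + ε) * (C.card.choose ℓ : ℝ) / (A.card.choose ℓ : ℝ)) := by
  classical
  have hsub : {ω | ∃ C' ⊆ C, C'.card = ℓ ∧
          C'.image (fun x => toLex (h ω x, x)) =
            Smallest (A.image fun x => toLex (h ω x, x)) ℓ}
      ⊆ ⋃ X ∈ C.powersetCard ℓ,
          {ω | ∀ x ∈ X, ∀ y ∈ A \ X, toLex (h ω x, x) < toLex (h ω y, y)} := by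
    rintro ω ⟨C', hC'C, hC'card, himage⟩
    have hinj : Function.Injective fun x => toLex (h ω x, x) :=
      fun _ _ e => congrArg (fun p => (ofLex p).2) e
    exact Set.mem_biUnion (Finset.mem_powersetCard.mpr ⟨hC'C, hC'card⟩)
      fun x hx y hy => lt_of_image_eq_smallest hinj himage hx hy
  calc _ ≤ _ := measure_mono hsub
    _ ≤ _ := measure_biUnion_finset_le_card_mul P _ _ fun X hX =>
        hmin X ((Finset.mem_powersetCard.mp hX).1.trans hC) (Finset.mem_powersetCard.mp hX).2
    _ = _ := by rw [Finset.card_powersetCard, natCast_mul_ofReal_div]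

/-- **Union bound over the `ℓ`-subsets of `C`.**  Let `h : Ω → (U → V)` be a random
hash function, `A ⊆ U` finite, `ℓ ≤ |A|`, `ε ≥ 0`, and `C ⊆ A` with `|C| ≥ ℓ`.
Write `f_ω x = (h ω x, x) ∈ V ×ₗ U` (lexicographic order).  If for every `X ⊆ A`
with `|X| = ℓ` the probability that all of `f_ω(X)` lies strictly below all of
`f_ω(A \ X)` is at most `(1+ε)/C(|A|,ℓ)`, then the probability that some
`ℓ`-subset `C' ⊆ C` has `f_ω(C') = Smallest(f_ω(A), ℓ)` is at most
`(1+ε)·C(|C|,ℓ)/C(|A|,ℓ)`. -/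
theorem union_bound_smallest_in_deleted {Ω U V : Type*} [MeasurableSpace Ω]
    (P : Measure Ω) [IsProbabilityMeasure P]
    [Fintype U] [LinearOrder U] [LinearOrder V]
    (h : Ω → U → V) (A : Finset U) (ℓ : ℕ) (hℓ : ℓ ≤ A.card)
    (ε : ℝ) (hε : 0 ≤ ε) (C : Finset U) (hC : C ⊆ A) (hCcard : ℓ ≤ C.card)
    (hmin : ∀ X ⊆ A, X.card = ℓ →
      P {ω | ∀ x ∈ X, ∀ y ∈ A \ X, toLex (h ω x, x) < toLex (h ω y, y)}
        ≤ ENNReal.ofReal ((1 + ε) / (A.card.choose ℓ : ℝ))) :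
    P {ω | ∃ C' ⊆ C, C'.card = ℓ ∧
          C'.image (fun x => toLex (h ω x, x)) =
            Smallest (A.image fun x => toLex (h ω x, x)) ℓ}
      ≤ ENNReal.ofReal ((1 + ε) * (C.card.choose ℓ : ℝ) / (A.card.choose ℓ : ℝ)) :=
  union_bound_smallest_in_deleted_general P h A ℓ ε C hC hmin
end

section
/- (Fault probability after n/4 operations.) There exists a constant γ > 1 (γ = 3 suffices) with the following property. Let (Ω, P) be a probability space, U a finite type, V a linear order, and h : Ω → (U → V) a random hash function; for ω ∈ Ω let f_ω : U → V × U be x ↦ (h(ω)(x), x) with V × U ordered lexicographically. Let A ⊆ U be finite with |A| = n ≥ 2, let ℓ be a natural number with ℓ ≥ γ · log₂ n and ℓ ≤ n, let 0 ≤ ε ≤ 1, and assume that for every X ⊆ A with |X| = ℓ, P{ω : ∀ x ∈ X, ∀ y ∈ A \ X, f_ω(x) < f_ω(y)} ≤ (1+ε) / C(|A|, ℓ). Then for every C ⊆ A with |C| ≤ n/4, P{ω : Smallest(f_ω(A), ℓ) ⊆ f_ω(C)} ≤ 1/n⁵. -/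
open MeasureTheory

/-!
If all `ℓ` smallest hashed pairs of `A` lie in `f(C)`, they are `f(X)` for some `ℓ`-subset
`X ⊆ C` all of whose hashes precede those of `A \ X`. A union bound over the `C(|C|, ℓ)`
choices of `X` and min-wise independence give probability at most
`C(|C|, ℓ) · 2 / C(n, ℓ) ≤ 2 / 4^ℓ`, because `4^ℓ C(c, ℓ) ≤ C(4c, ℓ)`; and `ℓ ≥ 3 log₂ n`
makes `4^ℓ ≥ n^6 ≥ 2 n^5`.
-/

section Smallest

variable {L : Type*} [LinearOrder L]

theorem card_Smallest (S : Finset L) (r : ℕ) : (Smallest S r).card = min r S.card := by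
  rw [Smallest, List.card_toFinset,
    List.Nodup.dedup ((List.take_sublist _ _).nodup (S.sort_nodup _)),
    List.length_take, Finset.length_sort]

theorem lt_of_mem_Smallest_of_notMem {S : Finset L} {r : ℕ} {a b : L}
    (ha : a ∈ Smallest S r) (hb : b ∈ S) (hb' : b ∉ Smallest S r) : a < b := by
  rw [Smallest, List.mem_toFinset] at ha hb'
  have hbd : b ∈ (S.sort (· ≤ ·)).drop r := by
    have hmem : b ∈ S.sort (· ≤ ·) := (Finset.mem_sort _).2 hb
    rw [← List.take_append_drop r (S.sort (· ≤ ·)), List.mem_append] at hmem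
    exact hmem.resolve_left hb'
  have hsorted := S.sortedLT_sort.pairwise
  rw [← List.take_append_drop r (S.sort (· ≤ ·)), List.pairwise_append] at hsorted
  exact hsorted.2.2 a ha b hbd

theorem exists_powersetCard_forall_lt_of_Smallest_subset {α : Type*} [DecidableEq α]
    {f : α → L} (hf : Function.Injective f) {A C : Finset α} {r : ℕ} (hr : r ≤ A.card)
    (hsub : Smallest (A.image f) r ⊆ C.image f) :
    ∃ X ∈ C.powersetCard r, ∀ x ∈ X, ∀ y ∈ A \ X, f x < f y := by
  set Sm := Smallest (A.image f) r
  have hmem_X : ∀ {x}, x ∈ C.filter (f · ∈ Sm) ↔ f x ∈ Sm := fun {x} => by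
    refine ⟨fun hx => (Finset.mem_filter.1 hx).2, fun hx => Finset.mem_filter.2 ⟨?_, hx⟩⟩
    obtain ⟨x', hx', hfx'⟩ := Finset.mem_image.1 (hsub hx)
    exact hf hfx' ▸ hx'
  have himage : (C.filter (f · ∈ Sm)).image f = Sm := by
    ext s
    refine ⟨fun hs => ?_, fun hs => ?_⟩
    · obtain ⟨x, hx, rfl⟩ := Finset.mem_image.1 hs
      exact hmem_X.1 hx
    · obtain ⟨x, -, rfl⟩ := Finset.mem_image.1 (hsub hs)
      exact Finset.mem_image_of_mem f (hmem_X.2 hs)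
  refine ⟨C.filter (f · ∈ Sm), Finset.mem_powersetCard.2 ⟨Finset.filter_subset _ _, ?_⟩, ?_⟩
  · rw [← Finset.card_image_of_injective _ hf, himage, card_Smallest,
      Finset.card_image_of_injective _ hf, min_eq_left hr]
  · intro x hx y hy
    obtain ⟨hyA, hyX⟩ := Finset.mem_sdiff.1 hy
    exact lt_of_mem_Smallest_of_notMem (hmem_X.1 hx) (Finset.mem_image_of_mem f hyA)
      (mt hmem_X.2 hyX)

end Smallest

theorem measure_Smallest_subset_image_le {Ω U V : Type*} [MeasurableSpace Ω] [LinearOrder U]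
    [LinearOrder V] (μ : Measure Ω) (h : Ω → U → V) {A C : Finset U} {ℓ : ℕ}
    (hℓ : ℓ ≤ A.card) {p : ENNReal}
    (hp : ∀ X ⊆ C, X.card = ℓ →
      μ {ω | ∀ x ∈ X, ∀ y ∈ A \ X, toLex (h ω x, x) < toLex (h ω y, y)} ≤ p) :
    μ {ω | Smallest (A.image fun x => toLex (h ω x, x)) ℓ ⊆ C.image fun x => toLex (h ω x, x)}
      ≤ C.card.choose ℓ * p :=
  calc _ ≤ μ (⋃ X ∈ (C.powersetCard ℓ : Set (Finset U)),
          {ω | ∀ x ∈ X, ∀ y ∈ A \ X, toLex (h ω x, x) < toLex (h ω y, y)}) := by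
        refine measure_mono fun ω hω => ?_
        have hinj : Function.Injective fun x => toLex (h ω x, x) :=
          fun a b hab => congrArg (fun q => (ofLex q).2) hab
        obtain ⟨X, hX, hlt⟩ := exists_powersetCard_forall_lt_of_Smallest_subset hinj hℓ hω
        exact Set.mem_biUnion (Finset.mem_coe.2 hX) hlt
    _ ≤ ∑ X ∈ C.powersetCard ℓ,
          μ {ω | ∀ x ∈ X, ∀ y ∈ A \ X, toLex (h ω x, x) < toLex (h ω y, y)} :=
        measure_biUnion_finset_le _ _
    _ ≤ ∑ _X ∈ C.powersetCard ℓ, p := Finset.sum_le_sum fun X hX =>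
        hp X (Finset.mem_powersetCard.1 hX).1 (Finset.mem_powersetCard.1 hX).2
    _ = C.card.choose ℓ * p := by
        rw [Finset.sum_const, Finset.card_powersetCard, nsmul_eq_mul]

theorem Nat.pow_mul_choose_le_choose_mul (k c ℓ : ℕ) :
    k ^ ℓ * c.choose ℓ ≤ (k * c).choose ℓ := by
  rcases Nat.eq_zero_or_pos k with rfl | hk
  · cases ℓ <;> simp
  have hdesc : k ^ ℓ * c.descFactorial ℓ ≤ (k * c).descFactorial ℓ := by
    rw [Nat.descFactorial_eq_prod_range, Nat.descFactorial_eq_prod_range,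
      Finset.pow_eq_prod_const, ← Finset.prod_mul_distrib]
    refine Finset.prod_le_prod' fun i _ => ?_
    rw [Nat.mul_sub]
    exact Nat.sub_le_sub_left (Nat.le_mul_of_pos_left i hk) _
  rw [Nat.descFactorial_eq_factorial_mul_choose, Nat.descFactorial_eq_factorial_mul_choose,
    Nat.mul_left_comm] at hdesc
  exact Nat.le_of_mul_le_mul_left hdesc (Nat.factorial_pos ℓ)

theorem pow_le_two_pow_of_mul_logb_le {x : ℝ} (hx : 0 < x) {k : ℕ} {ℓ : ℕ}
    (h : k * Real.logb 2 x ≤ ℓ) : x ^ k ≤ 2 ^ ℓ := by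
  rwa [← Real.logb_le_logb (b := 2) one_lt_two (by positivity) (by positivity),
    Real.logb_pow, Real.logb_pow, Real.logb_self_eq_one one_lt_two, mul_one]

theorem choose_mul_div_choose_le {n c ℓ : ℕ} {ε : ℝ} (hn : 2 ≤ n)
    (hℓ : 3 * Real.logb 2 n ≤ ℓ) (hℓn : ℓ ≤ n) (hc : 4 * c ≤ n) (hε : ε ≤ 1) :
    (c.choose ℓ : ℝ) * ((1 + ε) / n.choose ℓ) ≤ 1 / (n : ℝ) ^ 5 := by
  have hn0 : (0 : ℝ) < n := by positivity
  have hchoose : (0 : ℝ) < n.choose ℓ := by exact_mod_cast Nat.choose_pos hℓn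
  have h4pow : (4 : ℝ) ^ ℓ * c.choose ℓ ≤ n.choose ℓ := by
    exact_mod_cast (Nat.pow_mul_choose_le_choose_mul 4 c ℓ).trans (Nat.choose_le_choose ℓ hc)
  have hn6 : (n : ℝ) ^ 6 ≤ 4 ^ ℓ := by
    rw [show (4 : ℝ) ^ ℓ = 2 ^ (2 * ℓ) by rw [pow_mul]; norm_num]
    exact pow_le_two_pow_of_mul_logb_le hn0 (by push_cast; linarith)
  have h2n : (2 : ℝ) * n ^ 5 ≤ n ^ 6 := by
    rw [pow_succ _ 5, mul_comm]
    exact mul_le_mul_of_nonneg_left (by exact_mod_cast hn) (by positivity)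
  rw [mul_div_assoc', div_le_div_iff₀ hchoose (by positivity), one_mul]
  calc (c.choose ℓ : ℝ) * (1 + ε) * (n : ℝ) ^ 5 ≤ c.choose ℓ * (2 * (n : ℝ) ^ 5) := by
        rw [mul_assoc]
        exact mul_le_mul_of_nonneg_left (by nlinarith [pow_pos hn0 5]) (Nat.cast_nonneg _)
    _ ≤ (c.choose ℓ : ℝ) * 4 ^ ℓ := mul_le_mul_of_nonneg_left (h2n.trans hn6) (Nat.cast_nonneg _)
    _ ≤ (n.choose ℓ : ℝ) := by linarith

/-- **Fault probability after `n/4` operations.**  There is a constant `γ > 1` such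
that for any random hash function `h : Ω → (U → V)` (writing
`f_ω x = (h ω x, x) ∈ V ×ₗ U`, lexicographic order), any finite `A ⊆ U` with
`|A| = n ≥ 2`, any `ℓ` with `γ · log₂ n ≤ ℓ ≤ n`, any `0 ≤ ε ≤ 1` such that the
`(ε,ℓ)`-min-wise upper bound holds for all `ℓ`-subsets of `A`, and any `C ⊆ A`
with `|C| ≤ n/4`, the probability that all `ℓ` smallest hashed pairs of `A` lie in
`f_ω(C)` is at most `1/n⁵`. -/
theorem fault_probability_quarter :
    ∃ γ : ℝ, 1 < γ ∧
      ∀ (Ω U V : Type) [MeasurableSpace Ω] [Fintype U] [LinearOrder U] [LinearOrder V]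
        (P : Measure Ω) [IsProbabilityMeasure P]
        (h : Ω → U → V) (A : Finset U) (n ℓ : ℕ) (ε : ℝ),
        A.card = n → 2 ≤ n →
        γ * Real.logb 2 (n : ℝ) ≤ (ℓ : ℝ) → ℓ ≤ n →
        0 ≤ ε → ε ≤ 1 →
        (∀ X ⊆ A, X.card = ℓ →
          P {ω | ∀ x ∈ X, ∀ y ∈ A \ X, toLex (h ω x, x) < toLex (h ω y, y)}
            ≤ ENNReal.ofReal ((1 + ε) / (A.card.choose ℓ : ℝ))) →
        ∀ C ⊆ A, (C.card : ℝ) ≤ (n : ℝ) / 4 →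
          P {ω | Smallest (A.image fun x => toLex (h ω x, x)) ℓ ⊆
                C.image fun x => toLex (h ω x, x)}
            ≤ ENNReal.ofReal (1 / (n : ℝ) ^ 5) := by
  refine ⟨3, by norm_num, ?_⟩
  intro Ω U V _ _ _ _ P _ h A n ℓ ε hcard hn hℓ hℓn _ hε1 hminwise C hCA hC
  subst hcard
  have hc : 4 * C.card ≤ A.card := by
    exact_mod_cast (show ((4 * C.card : ℕ) : ℝ) ≤ A.card by push_cast; linarith)
  calc _ ≤ C.card.choose ℓ * ENNReal.ofReal ((1 + ε) / (A.card.choose ℓ : ℝ)) :=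
        measure_Smallest_subset_image_le P h hℓn fun X hX => hminwise X (hX.trans hCA)
    _ ≤ ENNReal.ofReal (1 / (A.card : ℝ) ^ 5) := by
        rw [← ENNReal.ofReal_natCast, ← ENNReal.ofReal_mul (Nat.cast_nonneg _)]
        exact ENNReal.ofReal_le_ofReal (choose_mul_div_choose_le hn hℓ hℓn hc hε1)
end

section
/- (Insert preserves the invariants.) Let L be a linear order, ℓ ≥ 1 a natural number, S a finite subset of L, δ ∈ WithTop L, and B = {s ∈ S : (s : WithTop L) ≤ δ}. Assume the invariants: B = {s ∈ S : s ≤ δ}, |B| ≤ ℓ, B = ∅ ↔ S = ∅, and S = ∅ → δ = ⊤. Let p ∈ L be a new element and set S' = S ∪ {p}. Define (B', δ') by: if ¬(p ≤ δ) then (B', δ') = (B, δ); otherwise B' = Smallest(B ∪ {p}, ℓ) and δ' = max B' if |B'| = ℓ, δ' = δ if |B'| < ℓ. Then the invariants hold for S': B' = {s ∈ S' : (s : WithTop L) ≤ δ'}, |B'| ≤ ℓ, and B' is nonempty (as S' is nonempty). -/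
/-!
If `p` lies above the threshold nothing changes; the buffer is nonempty because a finite
threshold forces `S ≠ ∅`. Otherwise the buffer `B ∪ {p}` is exactly the part of `S ∪ {p}` below
the old threshold. If it has at most `ℓ` elements it is kept whole; if not, its `ℓ` smallest
elements form a lower set of it, hence are precisely the elements of `S ∪ {p}` below their own
maximum, which becomes the new threshold.
-/

section

variable {L : Type*} [LinearOrder L]

theorem List.Pairwise.mem_take_of_le {l : List L} (hl : l.Pairwise (· < ·)) {r : ℕ} {x y : L}
    (hx : x ∈ l) (hy : y ∈ l.take r) (hxy : x ≤ y) : x ∈ l.take r := by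
  rw [← List.take_append_drop r l] at hl hx
  rcases List.mem_append.1 hx with hx | hx
  · exact hx
  · exact absurd hxy (not_le.2 ((List.pairwise_append.1 hl).2.2 y hy x hx))

namespace Smallest

theorem subset (S : Finset L) (r : ℕ) : Smallest S r ⊆ S := fun _ hx =>
  (S.mem_sort _).1 (List.mem_of_mem_take (List.mem_toFinset.1 hx))

theorem card_eq (S : Finset L) (r : ℕ) : (Smallest S r).card = min r S.card := by
  rw [Smallest, List.toFinset_card_of_nodup ((S.sort_nodup _).sublist (List.take_sublist _ _)),
    List.length_take, Finset.length_sort]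

theorem eq_self_of_card_le {S : Finset L} {r : ℕ} (h : S.card ≤ r) : Smallest S r = S := by
  rw [Smallest, List.take_of_length_le (by simpa using h), Finset.sort_toFinset]

theorem nonempty {S : Finset L} {r : ℕ} (hS : S.Nonempty) (hr : 1 ≤ r) :
    (Smallest S r).Nonempty := by
  rw [← Finset.card_pos, card_eq]
  exact lt_min hr hS.card_pos

theorem mem_of_le {S : Finset L} {r : ℕ} {x y : L} (hx : x ∈ S) (hy : y ∈ Smallest S r)
    (hxy : x ≤ y) : x ∈ Smallest S r :=
  List.mem_toFinset.2 <| S.sortedLT_sort.pairwise.mem_take_of_le ((S.mem_sort _).2 hx)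
    (List.mem_toFinset.1 hy) hxy

theorem eq_filter_le_max' (S : Finset L) (r : ℕ) (hne : (Smallest S r).Nonempty) :
    Smallest S r = S.filter (· ≤ (Smallest S r).max' hne) := by
  ext x
  rw [Finset.mem_filter]
  exact ⟨fun hx => ⟨subset S r hx, Finset.le_max' _ x hx⟩,
    fun ⟨hx, hle⟩ => mem_of_le hx (Finset.max'_mem _ hne) hle⟩

theorem filter_eq_filter_le_max' (S : Finset L) (δ : WithTop L) (r : ℕ)
    (hne : (Smallest (S.filter fun s : L => (s : WithTop L) ≤ δ) r).Nonempty) :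
    Smallest (S.filter fun s : L => (s : WithTop L) ≤ δ) r =
      S.filter fun s : L =>
        (s : WithTop L) ≤ ((Smallest (S.filter fun s : L => (s : WithTop L) ≤ δ) r).max' hne) := by
  set m := (Smallest (S.filter fun s : L => (s : WithTop L) ≤ δ) r).max' hne
  have hmδ : (m : WithTop L) ≤ δ := (Finset.mem_filter.1 (subset _ r (Finset.max'_mem _ hne))).2
  conv_lhs => rw [eq_filter_le_max' _ r hne, Finset.filter_filter]
  refine Finset.filter_congr fun s _ => ?_
  rw [WithTop.coe_le_coe]
  exact ⟨And.right, fun hsm => ⟨(WithTop.coe_le_coe.2 hsm).trans hmδ, hsm⟩⟩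

end Smallest

end

/-- **The `insert` operation preserves the buffer invariants.**  Let `ℓ ≥ 1`,
`S` a finite set in a linear order `L`, `δ ∈ WithTop L`, and
`B = {s ∈ S : s ≤ δ}` with `|B| ≤ ℓ`, `B = ∅ ↔ S = ∅`, and `S = ∅ → δ = ⊤`.
Insert a new element `p`, i.e. `S' = S ∪ {p}`, and define `(B', δ')` by:
if `¬(p ≤ δ)` then `(B', δ') = (B, δ)`; otherwise `B' = Smallest(B ∪ {p}, ℓ)` and
`δ' = max B'` if `|B'| = ℓ`, `δ' = δ` if `|B'| < ℓ`.  Then the invariants hold for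
`S'`: `B' = {s ∈ S' : s ≤ δ'}`, `|B'| ≤ ℓ`, and `B'` is nonempty. -/
theorem insert_preserves_invariants {L : Type*} [LinearOrder L]
    (ℓ : ℕ) (hℓ : 1 ≤ ℓ) (S : Finset L) (δ : WithTop L) (B : Finset L)
    (hinv1 : B = S.filter fun s : L => (s : WithTop L) ≤ δ)
    (hinv2 : B.card ≤ ℓ)
    (hinv3 : B = ∅ ↔ S = ∅)
    (hinv4 : S = ∅ → δ = ⊤)
    (p : L) (B' : Finset L) (δ' : WithTop L)
    (hskip : ¬ ((p : WithTop L) ≤ δ) → B' = B ∧ δ' = δ)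
    (htake : (p : WithTop L) ≤ δ →
      B' = Smallest (insert p B) ℓ ∧
        (B'.card = ℓ → ∀ hne : B'.Nonempty, δ' = (B'.max' hne : WithTop L)) ∧
        (B'.card < ℓ → δ' = δ)) :
    B' = (insert p S).filter (fun s : L => (s : WithTop L) ≤ δ') ∧
      B'.card ≤ ℓ ∧ B'.Nonempty := by
  by_cases hp : (p : WithTop L) ≤ δ
  · obtain ⟨rfl, hfull, hpartial⟩ := htake hp
    have hbuf : insert p B = (insert p S).filter fun s : L => (s : WithTop L) ≤ δ := by
      rw [Finset.filter_insert, if_pos hp, hinv1]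
    have hne := Smallest.nonempty (Finset.insert_nonempty p B) hℓ
    have hcard : (Smallest (insert p B) ℓ).card ≤ ℓ :=
      (Smallest.card_eq _ ℓ).trans_le (min_le_left _ _)
    refine ⟨?_, hcard, hne⟩
    rcases hcard.lt_or_eq with hlt | heq
    · have hkeep : (insert p B).card ≤ ℓ := by
        rw [Smallest.card_eq] at hlt
        omega
      rw [hpartial hlt, Smallest.eq_self_of_card_le hkeep, hbuf]
    · rw [hfull heq hne]
      simp only [hbuf]
      exact Smallest.filter_eq_filter_le_max' _ δ ℓ _
  · obtain ⟨rfl, rfl⟩ := hskip hp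
    have hS : S ≠ ∅ := fun h => hp (hinv4 h ▸ le_top)
    exact ⟨by rw [Finset.filter_insert, if_neg hp, hinv1], hinv2,
      Finset.nonempty_iff_ne_empty.2 (hS ∘ hinv3.1)⟩
end

section
/- (Fault-free delete preserves the invariants.) Let L be a linear order, ℓ ≥ 1 a natural number, S a finite subset of L, δ ∈ WithTop L, and B = {s ∈ S : (s : WithTop L) ≤ δ} with |B| ≤ ℓ, B = ∅ ↔ S = ∅, and S = ∅ → δ = ⊤. Let p ∈ L and set S' = S \ {p} and B' = B \ {p}. Then B' = {s ∈ S' : (s : WithTop L) ≤ δ} and |B'| ≤ ℓ; moreover, if B' ≠ ∅ then all three invariants hold for (S', B', δ) (in particular S' ≠ ∅). -/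
/-- **A fault-free `delete` preserves the buffer invariants.**  Let `ℓ ≥ 1`, `S` a
finite set in a linear order `L`, `δ ∈ WithTop L`, and `B = {s ∈ S : s ≤ δ}` with
`|B| ≤ ℓ`, `B = ∅ ↔ S = ∅`, and `S = ∅ → δ = ⊤`.  Let `p ∈ L`, and put
`S' = S \ {p}` and `B' = B \ {p}`.  Then `B' = {s ∈ S' : s ≤ δ}` and `|B'| ≤ ℓ`;
moreover, if `B' ≠ ∅` then all three invariants hold for `(S', B', δ)` (in
particular `S' ≠ ∅`). -/
theorem delete_preserves_invariants {L : Type*} [LinearOrder L]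
    (ℓ : ℕ) (hℓ : 1 ≤ ℓ) (S : Finset L) (δ : WithTop L) (B : Finset L)
    (hinv1 : B = S.filter fun s : L => (s : WithTop L) ≤ δ)
    (hinv2 : B.card ≤ ℓ)
    (hinv3 : B = ∅ ↔ S = ∅)
    (hinv4 : S = ∅ → δ = ⊤)
    (p : L) :
    B.erase p = (S.erase p).filter (fun s : L => (s : WithTop L) ≤ δ) ∧
      (B.erase p).card ≤ ℓ ∧
      ((B.erase p).Nonempty →
        ((B.erase p = ∅ ↔ S.erase p = ∅) ∧ (S.erase p = ∅ → δ = ⊤) ∧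
          (S.erase p).Nonempty)) := by
  have h1 : B.erase p = (S.erase p).filter (fun s : L => (s : WithTop L) ≤ δ) := by
    subst hinv1
    ext x
    simp [Finset.mem_erase, Finset.mem_filter, and_assoc, and_left_comm]
  refine ⟨h1, le_trans (Finset.card_le_card (Finset.erase_subset _ _)) hinv2, ?_⟩
  intro hne
  have hSne : (S.erase p).Nonempty := by
    obtain ⟨x, hx⟩ := hne
    rw [h1] at hx
    exact ⟨x, (Finset.mem_filter.mp hx).1⟩
  refine ⟨⟨fun h => absurd h hne.ne_empty, fun h => absurd h hSne.ne_empty⟩, fun h => absurd h hSne.ne_empty, hSne⟩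
end
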